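/- Let G = K_{n₁} ⊕ (K_{n₂} ∪ K_{n₃} ∪ n₄K₁) be the join of a complete graph K_{n₁} with the disjoint union of two complete graphs and n₄ isolated vertices, where n₁,n₂,n₃ ≥ 1 and n₄ ≥ 0. Then ω(G) = ψ(G) = n₁ + max{n₂, n₃}. -/

import Mathlib

open SimpleGraph

/-- A coloring of the vertices with colors `0, ..., k-1` which uses all `k` colors and such
that every pair of distinct colors appears on the endpoints of some edge. -/
def IsCompleteColoring {V : Type*} (G : SimpleGraph V) (c : V → ℕ) (k : ℕ) : Prop :=
  (∀ v, c v < k) ∧ (∀ i, i < k → ∃ v, c v = i) ∧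
    ∀ i j, i < k → j < k → i ≠ j → ∃ u w, G.Adj u w ∧ c u = i ∧ c w = j

/-- A proper coloring: adjacent vertices get distinct colors. -/
def IsProperColoring {V : Type*} (G : SimpleGraph V) (c : V → ℕ) : Prop :=
  ∀ u w, G.Adj u w → c u ≠ c w

/-- A Grundy coloring with `k` colors: proper, uses all `k` colors, and every vertex of
color `j` has, for each `i < j`, a neighbor colored `i`. -/
def IsGrundyColoring {V : Type*} (G : SimpleGraph V) (c : V → ℕ) (k : ℕ) : Prop :=
  (∀ v, c v < k) ∧ (∀ i, i < k → ∃ v, c v = i) ∧ IsProperColoring G c ∧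
    ∀ v i, i < c v → ∃ u, G.Adj u v ∧ c u = i

/-- The pseudoachromatic number `ψ`. -/
noncomputable def pseudoachromaticNumber {V : Type*} (G : SimpleGraph V) : ℕ :=
  sSup {k | ∃ c, IsCompleteColoring G c k}

/-- The achromatic number `α`. -/
noncomputable def achromaticNumber {V : Type*} (G : SimpleGraph V) : ℕ :=
  sSup {k | ∃ c, IsCompleteColoring G c k ∧ IsProperColoring G c}

/-- The Grundy number `Γ`. -/
noncomputable def grundyNumber {V : Type*} (G : SimpleGraph V) : ℕ :=
  sSup {k | ∃ c, IsGrundyColoring G c k}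

/-- The chromatic number `χ` (as a natural number). -/
noncomputable def chromNumber {V : Type*} (G : SimpleGraph V) : ℕ :=
  sInf {k | ∃ c : V → ℕ, (∀ v, c v < k) ∧ IsProperColoring G c}

/-- The clique number `ω`. -/
noncomputable def cliqueNumber {V : Type*} (G : SimpleGraph V) : ℕ :=
  sSup {n | ∃ s : Finset V, G.IsNClique n s}

/-- `G` is `H`-free: no induced subgraph of `G` is isomorphic to `H`. -/
def GraphFree {V W : Type*} (G : SimpleGraph V) (H : SimpleGraph W) : Prop :=
  ∀ s : Set V, IsEmpty ((G.induce s) ≃g H)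

/-- `G` is `ωψ`-perfect. -/
def OmegaPsiPerfect {V : Type*} (G : SimpleGraph V) : Prop :=
  ∀ s : Set V, cliqueNumber (G.induce s) = pseudoachromaticNumber (G.induce s)

/-- `G` is `χψ`-perfect. -/
def ChiPsiPerfect {V : Type*} (G : SimpleGraph V) : Prop :=
  ∀ s : Set V, chromNumber (G.induce s) = pseudoachromaticNumber (G.induce s)

/-- The path on 4 vertices. -/
def pathP4 : SimpleGraph (Fin 4) :=
  SimpleGraph.fromRel (fun a b => (b : ℕ) = (a : ℕ) + 1)

/-- The cycle on 4 vertices. -/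
def cycleC4 : SimpleGraph (Fin 4) :=
  SimpleGraph.fromRel (fun a b => b = a + 1)

/-- The disjoint union of a path on 3 vertices and an edge. -/
def graphP3K2 : SimpleGraph (Fin 5) :=
  SimpleGraph.fromRel (fun a b => (a, b) ∈ [((0 : Fin 5), (1 : Fin 5)), (1, 2), (3, 4)])

/-- The disjoint union of three edges. -/
def graph3K2 : SimpleGraph (Fin 6) :=
  SimpleGraph.fromRel (fun a b => (a, b) ∈ [((0 : Fin 6), (1 : Fin 6)), (2, 3), (4, 5)])

/-- The join of two graphs. -/
def graphJoin {V W : Type*} (G : SimpleGraph V) (H : SimpleGraph W) : SimpleGraph (V ⊕ W) :=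
  SimpleGraph.fromRel (fun x y =>
    match x, y with
    | Sum.inl a, Sum.inl b => G.Adj a b
    | Sum.inr a, Sum.inr b => H.Adj a b
    | _, _ => True)

/-- The disjoint union of two graphs. -/
def graphSum {V W : Type*} (G : SimpleGraph V) (H : SimpleGraph W) : SimpleGraph (V ⊕ W) :=
  SimpleGraph.fromRel (fun x y =>
    match x, y with
    | Sum.inl a, Sum.inl b => G.Adj a b
    | Sum.inr a, Sum.inr b => H.Adj a b
    | _, _ => False)

/-- The disjoint union of a family of graphs. -/
def graphSigma {ι : Type} {U : ι → Type} (f : ∀ i, SimpleGraph (U i)) :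
    SimpleGraph (Σ i, U i) :=
  SimpleGraph.fromRel (fun x y => ∃ h : x.1 = y.1, (f y.1).Adj (h ▸ x.2) y.2)


/-! Any clique of size `m ≥ 1` gives a complete coloring with `m` colors, and
`K_{n₁} ⊕ K_{n₂}` or `K_{n₁} ⊕ K_{n₃}` is a clique of size `n₁ + max n₂ n₃`, so it suffices to
bound the number `k` of colors of a complete coloring. At least `k - n₁` colors are missing from
`K_{n₁}`, and these must pairwise meet along edges of `K_{n₂} ∪ K_{n₃} ∪ n₄K₁`. If there are
two or more of them, none lives only on the isolated vertices; and as no edge joins `K_{n₂}` to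
`K_{n₃}`, a color absent from one of the two cliques forces all the others into the other one. -/

namespace SimpleGraph

variable {V W : Type*} {G : SimpleGraph V} {H : SimpleGraph W}

section Adjacency

variable {a a' : V} {b b' : W}

@[simp]
lemma graphJoin_adj_inl_inl : (graphJoin G H).Adj (.inl a) (.inl a') ↔ G.Adj a a' := by
  simp only [graphJoin, fromRel_adj, ne_eq, Sum.inl.injEq]
  exact ⟨fun h => h.2.elim id G.adj_symm, fun h => ⟨h.ne, .inl h⟩⟩

@[simp]
lemma graphJoin_adj_inr_inr : (graphJoin G H).Adj (.inr b) (.inr b') ↔ H.Adj b b' := by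
  simp only [graphJoin, fromRel_adj, ne_eq, Sum.inr.injEq]
  exact ⟨fun h => h.2.elim id H.adj_symm, fun h => ⟨h.ne, .inl h⟩⟩

@[simp]
lemma graphJoin_adj_inl_inr : (graphJoin G H).Adj (.inl a) (.inr b) := by
  simp [graphJoin]

@[simp]
lemma graphSum_adj_inl_inl : (graphSum G H).Adj (.inl a) (.inl a') ↔ G.Adj a a' := by
  simp only [graphSum, fromRel_adj, ne_eq, Sum.inl.injEq]
  exact ⟨fun h => h.2.elim id G.adj_symm, fun h => ⟨h.ne, .inl h⟩⟩

@[simp]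
lemma graphSum_adj_inr_inr : (graphSum G H).Adj (.inr b) (.inr b') ↔ H.Adj b b' := by
  simp only [graphSum, fromRel_adj, ne_eq, Sum.inr.injEq]
  exact ⟨fun h => h.2.elim id H.adj_symm, fun h => ⟨h.ne, .inl h⟩⟩

@[simp]
lemma graphSum_not_adj_inl_inr : ¬ (graphSum G H).Adj (.inl a) (.inr b) := by
  simp [graphSum]

@[simp]
lemma graphSum_not_adj_inr_inl : ¬ (graphSum G H).Adj (.inr b) (.inl a) := by
  simp [graphSum]

end Adjacency

lemma isNClique_completeGraph_univ [Fintype V] :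
    (completeGraph V).IsNClique (Fintype.card V) Finset.univ :=
  ⟨IsClique.top _, Finset.card_univ⟩

lemma IsNClique.disjSum_graphJoin {s : Finset V} {t : Finset W} {m n : ℕ} (hs : G.IsNClique m s)
    (ht : H.IsNClique n t) : (graphJoin G H).IsNClique (m + n) (s.disjSum t) := by
  refine ⟨?_, by rw [Finset.card_disjSum, hs.card_eq, ht.card_eq]⟩
  rintro (a | b) hx (a' | b') hy hne <;>
    simp only [Finset.mem_coe, Finset.inl_mem_disjSum, Finset.inr_mem_disjSum] at hx hy
  · exact graphJoin_adj_inl_inl.2 (hs.isClique hx hy fun h => hne (h ▸ rfl))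
  · exact graphJoin_adj_inl_inr
  · exact (graphJoin G H).adj_symm graphJoin_adj_inl_inr
  · exact graphJoin_adj_inr_inr.2 (ht.isClique hx hy fun h => hne (h ▸ rfl))

lemma IsNClique.graphSum_inl {s : Finset V} {n : ℕ} (hs : G.IsNClique n s) :
    (graphSum G H).IsNClique n (s.map .inl) :=
  hs.map.mono ((map_le_iff_le_comap _ _ _).2 fun _ _ h => by simpa using h)

lemma IsNClique.graphSum_inr {t : Finset W} {n : ℕ} (ht : H.IsNClique n t) :
    (graphSum G H).IsNClique n (t.map .inr) :=
  ht.map.mono ((map_le_iff_le_comap _ _ _).2 fun _ _ h => by simpa using h)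

lemma exists_isNClique_graphSum_max {s : Finset V} {t : Finset W} {m n : ℕ}
    (hs : G.IsNClique m s) (ht : H.IsNClique n t) :
    ∃ r, (graphSum G H).IsNClique (max m n) r := by
  rcases le_total m n with h | h
  · exact ⟨_, max_eq_right h ▸ ht.graphSum_inr⟩
  · exact ⟨_, max_eq_left h ▸ hs.graphSum_inl⟩

end SimpleGraph

section Coloring

open Finset

variable {V W U₁ U₂ : Type*}

lemma SimpleGraph.IsNClique.exists_isCompleteColoring {G : SimpleGraph V} {n : ℕ}
    {s : Finset V} (h : G.IsNClique n s) (hn : 0 < n) : ∃ c, IsCompleteColoring G c n := by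
  classical
  obtain ⟨hclique, rfl⟩ := h
  let e := s.equivFin
  refine ⟨fun v => if hv : v ∈ s then e ⟨v, hv⟩ else 0, fun v => ?_, fun i hi => ?_,
    fun i j hi hj hij => ?_⟩
  · dsimp only
    split_ifs
    exacts [(e _).isLt, hn]
  · exact ⟨e.symm ⟨i, hi⟩, by simp⟩
  · refine ⟨e.symm ⟨i, hi⟩, e.symm ⟨j, hj⟩, hclique (e.symm _).2 (e.symm _).2 ?_,
      by simp, by simp⟩
    simpa [Subtype.ext_iff, e.symm.injective.eq_iff] using hij

lemma cliqueNumber_eq_and_pseudoachromaticNumber_eq_of_isNClique {G : SimpleGraph V} {N : ℕ}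
    {s : Finset V} (hs : G.IsNClique N s) (hN : 0 < N)
    (hle : ∀ c k, IsCompleteColoring G c k → k ≤ N) :
    cliqueNumber G = N ∧ pseudoachromaticNumber G = N := by
  have hclique : ∀ n t, G.IsNClique n t → n ≤ N := by
    rintro (_ | n) t ht
    · exact N.zero_le
    · obtain ⟨c, hc⟩ := ht.exists_isCompleteColoring n.succ_pos
      exact hle c _ hc
  obtain ⟨c, hc⟩ := hs.exists_isCompleteColoring hN
  exact ⟨IsGreatest.csSup_eq ⟨⟨s, hs⟩, fun n ⟨t, ht⟩ => hclique n t ht⟩,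
    IsGreatest.csSup_eq ⟨⟨c, hc⟩, fun k ⟨c, hc⟩ => hle c k hc⟩⟩

def IsCompleteOn (G : SimpleGraph V) (c : V → ℕ) (S : Finset ℕ) : Prop :=
  (∀ i ∈ S, ∃ v, c v = i) ∧ ∀ i ∈ S, ∀ j ∈ S, i ≠ j → ∃ u w, G.Adj u w ∧ c u = i ∧ c w = j

lemma Finset.card_le_card_of_coe_subset_range [Fintype V] {f : V → ℕ} {S : Finset ℕ}
    (h : (S : Set ℕ) ⊆ Set.range f) : #S ≤ Fintype.card V :=
  card_le_card_of_surjOn f (by rwa [coe_univ, Set.SurjOn, Set.image_univ])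

lemma IsCompleteColoring.exists_isCompleteOn_graphJoin_right [Fintype V] {G : SimpleGraph V}
    {H : SimpleGraph W} {c : V ⊕ W → ℕ} {k : ℕ} (hc : IsCompleteColoring (graphJoin G H) c k) :
    ∃ S : Finset ℕ, k ≤ Fintype.card V + #S ∧ IsCompleteOn H (c ∘ Sum.inr) S := by
  classical
  obtain ⟨-, hsurj, hpair⟩ := hc
  set S := range k \ univ.image (c ∘ Sum.inl)
  have hright : ∀ {i}, i ∈ S → ∀ v, c v = i → ∃ w, v = .inr w := by
    rintro i hi (a | w) rfl
    · simp [S] at hi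
    · exact ⟨w, rfl⟩
  refine ⟨S, ?_, fun i hi => ?_, fun i hi j hj hij => ?_⟩
  · calc k = #(range k) := (card_range k).symm
      _ ≤ #S + #(univ.image (c ∘ Sum.inl)) := card_le_card_sdiff_add_card
      _ ≤ Fintype.card V + #S := by
        rw [add_comm]; gcongr; exact card_image_le.trans_eq card_univ
  · obtain ⟨v, hv⟩ := hsurj i (mem_range.1 (mem_sdiff.1 hi).1)
    obtain ⟨w, rfl⟩ := hright hi v hv
    exact ⟨w, hv⟩
  · obtain ⟨u, w, hadj, hu, hw⟩ := hpair i j (mem_range.1 (mem_sdiff.1 hi).1)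
      (mem_range.1 (mem_sdiff.1 hj).1) hij
    obtain ⟨u, rfl⟩ := hright hi u hu
    obtain ⟨w, rfl⟩ := hright hj w hw
    exact ⟨u, w, graphJoin_adj_inr_inr.1 hadj, hu, hw⟩

lemma IsCompleteOn.card_le_max_of_graphSum [Fintype U₁] [Fintype U₂] {G₁ : SimpleGraph U₁}
    {G₂ : SimpleGraph U₂} {c : U₁ ⊕ U₂ → ℕ} {S : Finset ℕ}
    (hS : IsCompleteOn (graphSum G₁ G₂) c S) :
    #S ≤ max (Fintype.card U₁) (Fintype.card U₂) := by
  by_cases hl : (S : Set ℕ) ⊆ Set.range (c ∘ Sum.inl)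
  · exact (card_le_card_of_coe_subset_range hl).trans (le_max_left _ _)
  -- a color `i` used only on the right meets every other color of `S` along a right edge
  obtain ⟨i, hiS, hil⟩ := Set.not_subset.1 hl
  refine (card_le_card_of_coe_subset_range (f := c ∘ Sum.inr) fun j hj => ?_).trans
    (le_max_right _ _)
  obtain rfl | hji := eq_or_ne j i
  · obtain ⟨a | b, hv⟩ := hS.1 j hj
    exacts [absurd ⟨a, hv⟩ hil, ⟨b, hv⟩]
  · obtain ⟨a | b, a' | b', hadj, hu, hw⟩ := hS.2 j hj i hiS hji
    · exact absurd ⟨a', hw⟩ hil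
    · exact absurd hadj graphSum_not_adj_inl_inr
    · exact absurd ⟨a', hw⟩ hil
    · exact ⟨b, hu⟩

lemma IsCompleteOn.of_graphSum_bot {G : SimpleGraph V} {c : V ⊕ W → ℕ} {S : Finset ℕ}
    (hS : IsCompleteOn (graphSum G (⊥ : SimpleGraph W)) c S) (hS1 : 1 < #S) :
    IsCompleteOn G (c ∘ Sum.inl) S := by
  have hedge : ∀ {u w}, (graphSum G (⊥ : SimpleGraph W)).Adj u w →
      ∃ a a', u = .inl a ∧ w = .inl a' ∧ G.Adj a a' := by
    rintro (a | b) (a' | b') h <;>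
      simp only [graphSum_adj_inl_inl, graphSum_adj_inr_inr, graphSum_not_adj_inl_inr,
        graphSum_not_adj_inr_inl, bot_adj] at h
    exact ⟨a, a', rfl, rfl, h⟩
  refine ⟨fun i hi => ?_, fun i hi j hj hij => ?_⟩
  · obtain ⟨j, hj, hji⟩ := exists_mem_ne hS1 i
    obtain ⟨u, w, hadj, hu, -⟩ := hS.2 i hi j hj hji.symm
    obtain ⟨a, a', rfl, rfl, -⟩ := hedge hadj
    exact ⟨a, hu⟩
  · obtain ⟨u, w, hadj, hu, hw⟩ := hS.2 i hi j hj hij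
    obtain ⟨a, a', rfl, rfl, h⟩ := hedge hadj
    exact ⟨a, a', h, hu, hw⟩

lemma IsCompleteColoring.le_of_graphJoin_graphSum_graphSum_bot [Fintype V] [Fintype U₁]
    [Fintype U₂] {G : SimpleGraph V} {G₁ : SimpleGraph U₁} {G₂ : SimpleGraph U₂}
    {c : V ⊕ ((U₁ ⊕ U₂) ⊕ W) → ℕ} {k : ℕ}
    (hc : IsCompleteColoring (graphJoin G (graphSum (graphSum G₁ G₂) (⊥ : SimpleGraph W))) c k) :
    k ≤ Fintype.card V + max (max (Fintype.card U₁) (Fintype.card U₂)) 1 := by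
  obtain ⟨S, hk, hS⟩ := hc.exists_isCompleteOn_graphJoin_right
  refine hk.trans (Nat.add_le_add_left ?_ _)
  rcases le_or_gt #S 1 with h | h
  · exact h.trans (le_max_right _ _)
  · exact (hS.of_graphSum_bot h).card_le_max_of_graphSum.trans (le_max_left _ _)

end Coloring

theorem stmt_13_general (n₁ n₂ n₃ n₄ : ℕ) (h₂ : 1 ≤ n₂) :
    cliqueNumber (graphJoin (completeGraph (Fin n₁))
        (graphSum (graphSum (completeGraph (Fin n₂)) (completeGraph (Fin n₃)))
          (⊥ : SimpleGraph (Fin n₄)))) = n₁ + max n₂ n₃ ∧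
    pseudoachromaticNumber (graphJoin (completeGraph (Fin n₁))
        (graphSum (graphSum (completeGraph (Fin n₂)) (completeGraph (Fin n₃)))
          (⊥ : SimpleGraph (Fin n₄)))) = n₁ + max n₂ n₃ := by
  obtain ⟨r, hr⟩ := exists_isNClique_graphSum_max (isNClique_completeGraph_univ (V := Fin n₂))
    (isNClique_completeGraph_univ (V := Fin n₃))
  have hclique := (isNClique_completeGraph_univ (V := Fin n₁)).disjSum_graphJoin
    (hr.graphSum_inl (H := (⊥ : SimpleGraph (Fin n₄))))
  simp only [Fintype.card_fin] at hclique
  refine cliqueNumber_eq_and_pseudoachromaticNumber_eq_of_isNClique hclique (by omega)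
    fun c k hc => ?_
  have hmax : max (max n₂ n₃) 1 = max n₂ n₃ := max_eq_left (le_max_of_le_left h₂)
  simpa only [Fintype.card_fin, hmax] using hc.le_of_graphJoin_graphSum_graphSum_bot

theorem stmt_13 (n₁ n₂ n₃ n₄ : ℕ) (h₁ : 1 ≤ n₁) (h₂ : 1 ≤ n₂) (h₃ : 1 ≤ n₃) :
    cliqueNumber (graphJoin (completeGraph (Fin n₁))
        (graphSum (graphSum (completeGraph (Fin n₂)) (completeGraph (Fin n₃)))
          (⊥ : SimpleGraph (Fin n₄)))) = n₁ + max n₂ n₃ ∧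
    pseudoachromaticNumber (graphJoin (completeGraph (Fin n₁))
        (graphSum (graphSum (completeGraph (Fin n₂)) (completeGraph (Fin n₃)))
          (⊥ : SimpleGraph (Fin n₄)))) = n₁ + max n₂ n₃ :=
  stmt_13_general n₁ n₂ n₃ n₄ h₂
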